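/- arXiv:1707.06221 — 3 statements merged into one kernel-verified Lean document; each statement's English description precedes it below -/
import Mathlib

section
/- Let a chemical reaction network have species energies G[S_i] ∈ ℝ and rate constants satisfying k_{r+}/k_{r-} = e^{-∑_i Δ_{r+}^i G[S_i]} for each reversible reaction pair, where Δ_{r+} = ν_{r+} - μ_{r+}. Then for any state s ∈ ℕ^M and reaction r+ with s ≥ μ_{r+}, setting s' = s + Δ_{r+}, the mass-action propensities ρ_{r+}(s) = k_{r+} ∏_i s_i!/(s_i - μ_{r+}^i)! and ρ_{r-}(s') = k_{r-} ∏_i s'_i!/(s'_i - ν_{r+}^i)! satisfy ρ_{r+}(s)/ρ_{r-}(s') = e^{𝒢(s) - 𝒢(s')} where 𝒢(s) = ∑_i (s_i G[S_i] + log(s_i!)). -/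
/-- For a reversible reaction pair of a detailed balanced CRN (rate constants
satisfying `k⁺/k⁻ = exp (-∑ᵢ Δᵢ G i)`), the mass-action propensities satisfy
`ρ⁺(s) / ρ⁻(s') = exp (𝒢 s - 𝒢 s')` where `s' = s + Δ` and
`𝒢 s = ∑ᵢ (sᵢ G i + log sᵢ!)`. -/
theorem crn_propensity_ratio (M : ℕ)
    (μ ν : Fin M → ℕ) (G : Fin M → ℝ)
    (kplus kminus : ℝ) (hkp : 0 < kplus) (hkm : 0 < kminus)
    (hdb : kplus / kminus = Real.exp (-(∑ i, ((ν i : ℝ) - (μ i : ℝ)) * G i)))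
    (𝒢 : (Fin M → ℕ) → ℝ)
    (h𝒢 : ∀ s, 𝒢 s = ∑ i, ((s i : ℝ) * G i + Real.log (Nat.factorial (s i))))
    (s : Fin M → ℕ) (hs : ∀ i, μ i ≤ s i)
    (s' : Fin M → ℕ) (hs' : ∀ i, s' i = s i - μ i + ν i)
    (ρplus ρminus : ℝ)
    (hρp : ρplus = kplus * ∏ i, ((Nat.factorial (s i) : ℝ) / (Nat.factorial (s i - μ i) : ℝ)))
    (hρm : ρminus = kminus * ∏ i, ((Nat.factorial (s' i) : ℝ) / (Nat.factorial (s' i - ν i) : ℝ))) :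
    ρplus / ρminus = Real.exp (𝒢 s - 𝒢 s') := by
  have hfac : ∀ n : ℕ, (0:ℝ) < (Nat.factorial n : ℝ) :=
    fun n => by exact_mod_cast n.factorial_pos
  have hsub : ∀ i, s' i - ν i = s i - μ i := by
    intro i; have := hs' i; omega
  have hQ : (0:ℝ) < ∏ i, ((Nat.factorial (s' i) : ℝ) / (Nat.factorial (s' i - ν i) : ℝ)) :=
    Finset.prod_pos fun i _ => div_pos (hfac _) (hfac _)
  have hP : (∏ i, ((Nat.factorial (s i) : ℝ) / (Nat.factorial (s i - μ i) : ℝ)))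
      = (∏ i, ((Nat.factorial (s i) : ℝ) / (Nat.factorial (s' i) : ℝ)))
        * ∏ i, ((Nat.factorial (s' i) : ℝ) / (Nat.factorial (s' i - ν i) : ℝ)) := by
    rw [← Finset.prod_mul_distrib]
    refine Finset.prod_congr rfl fun i _ => ?_
    rw [hsub i]
    rw [div_mul_div_comm, mul_comm ((Nat.factorial (s' i) : ℝ)) _,
      mul_div_mul_right _ _ (hfac (s' i)).ne']
  have key : ρplus / ρminus
      = (kplus / kminus) * ∏ i, ((Nat.factorial (s i) : ℝ) / (Nat.factorial (s' i) : ℝ)) := by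
    rw [hρp, hρm, hP]
    field_simp

  have hGdiff : 𝒢 s - 𝒢 s' = (-(∑ i, ((ν i : ℝ) - (μ i : ℝ)) * G i))
      + ∑ i, (Real.log (Nat.factorial (s i)) - Real.log (Nat.factorial (s' i))) := by
    rw [h𝒢, h𝒢, ← Finset.sum_sub_distrib, ← Finset.sum_neg_distrib, ← Finset.sum_add_distrib]
    refine Finset.sum_congr rfl fun i _ => ?_
    have h1 : ((s' i : ℝ)) = (s i : ℝ) - (μ i : ℝ) + (ν i : ℝ) := by
      rw [hs' i]; push_cast [hs i]; ring
    rw [h1]; ring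
  rw [key, hGdiff, Real.exp_add, ← hdb, Real.exp_sum]
  congr 1
  refine Finset.prod_congr rfl fun i _ => ?_
  rw [Real.exp_sub, Real.exp_log (hfac _), Real.exp_log (hfac _)]
end

section
/- Consider the direct CBM on N dual-rail species pairs (X_i^{ON}, X_i^{OFF}) with conservation laws x_i^{ON} + x_i^{OFF} = 1, and reactions for each node i and each neighbor configuration α with rate-constant ratios k_{i+|α}/k_{i-|α} = exp(θ_i + ∑_{j∈N(i)} w_{ij} x_j^{ON}). Then the induced CTMC on the reachable state space satisfies detailed balance with respect to π(s) ∝ exp(∑_{i<j} w_{ij} x_i^{ON} x_j^{ON} + ∑_i θ_i x_i^{ON}), and π is the unique stationary distribution; under the bijection x_i = x_i^{ON} it equals the Boltzmann machine distribution P(x) = e^{-E(x)}/Z. -/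
/-!
Flipping node `i` from OFF to ON raises the exponent `-E x = ∑_{j<k} w j k x_j x_k + ∑_j θ j x_j`
of `π` by exactly `θ i + ∑_j w i j x_j`, the logarithm of the prescribed rate ratio, so `π` is in
detailed balance and hence stationary. Uniqueness is a maximum principle: for a stationary `p`,
detailed balance turns the balance equation at a maximiser of `p / π` into a sum of nonpositive
terms, so `p / π` is constant along positive-rate transitions, and single flips connect the whole
hypercube.
-/

open Finset Function Relation

/-- numeric value of a binary (dual-rail) species state -/
def bval (b : Bool) : ℝ := if b then 1 else 0

section Energy

variable {ι : Type*} [Fintype ι] [LinearOrder ι]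

def pairInteraction (w : ι → ι → ℝ) (x : ι → ℝ) : ℝ :=
  ∑ p ∈ univ.filter (fun p : ι × ι => p.1 < p.2), w p.1 p.2 * x p.1 * x p.2

def negEnergy (w : ι → ι → ℝ) (θ : ι → ℝ) (x : ι → ℝ) : ℝ :=
  pairInteraction w x + ∑ i, θ i * x i

theorem pairInteraction_eq_sum_sum (w : ι → ι → ℝ) (x : ι → ℝ) :
    pairInteraction w x = ∑ j, ∑ k, if j < k then w j k * x j * x k else 0 := by
  rw [pairInteraction, sum_filter, Fintype.sum_prod_type]

theorem pairInteraction_add_single {w : ι → ι → ℝ} (hsym : ∀ i j, w i j = w j i)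
    (hdiag : ∀ i, w i i = 0) (x : ι → ℝ) (i : ι) (a : ℝ) :
    pairInteraction w (x + Pi.single i a) = pairInteraction w x + a * ∑ j, w i j * x j := by
  have hterm : ∀ j k,
      (if j < k then w j k * (x + Pi.single i a : ι → ℝ) j * (x + Pi.single i a : ι → ℝ) k
        else 0)
      = (if j < k then w j k * x j * x k else 0)
        + ((if k = i then a * ((if j < i then w j i else 0) * x j) else 0)
        + (if j = i then a * ((if i < k then w i k else 0) * x k) else 0)) := by
    intro j k
    rcases eq_or_ne j i with rfl | hj <;> rcases eq_or_ne k j with rfl | hk <;>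
      split_ifs <;> simp_all <;> ring
  have hfield : ∀ j, (if j < i then w j i else 0) + (if i < j then w i j else 0) = w i j := by
    intro j
    rcases lt_trichotomy j i with h | rfl | h
    · simp [h, h.not_gt, hsym j i]
    · simp [hdiag]
    · simp [h, h.not_gt]
  simp only [pairInteraction_eq_sum_sum, hterm, sum_add_distrib, sum_ite_irrel, sum_const_zero,
    sum_ite_eq', mem_univ, if_true]
  rw [← mul_sum, ← mul_sum, ← mul_add, ← sum_add_distrib]
  simp only [← add_mul, hfield]

theorem negEnergy_add_single {w : ι → ι → ℝ} (θ : ι → ℝ)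
    (hsym : ∀ i j, w i j = w j i) (hdiag : ∀ i, w i i = 0) (x : ι → ℝ) (i : ι) (a : ℝ) :
    negEnergy w θ (x + Pi.single i a) = negEnergy w θ x + a * (θ i + ∑ j, w i j * x j) := by
  simp only [negEnergy, pairInteraction_add_single hsym hdiag, Pi.add_apply, mul_add,
    sum_add_distrib, Pi.single_apply, mul_ite, mul_zero, sum_ite_eq', mem_univ, if_true]
  ring

end Energy

section BoolFlip

variable {ι : Type*} [DecidableEq ι]

theorem reflTransGen_update_not [Fintype ι] (s t : ι → Bool) :
    ReflTransGen (fun a b => ∃ i, b = update a i (!a i)) s t := by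
  suffices h : ∀ S : Finset ι, ∀ s, (∀ i ∉ S, s i = t i) →
      ReflTransGen (fun a b => ∃ i, b = update a i (!a i)) s t from
    h univ s fun i hi => absurd (mem_univ i) hi
  intro S
  induction S using Finset.induction_on with
  | empty => exact fun s hs => funext (fun i => hs i (notMem_empty i)) ▸ .refl
  | insert a S _ ih =>
    intro s hs
    have hrest : ReflTransGen _ (update s a (t a)) t := ih _ fun i hi => by
      rcases eq_or_ne i a with rfl | hia
      · exact update_self ..
      · rw [update_of_ne hia]; exact hs i (by simp [hia, hi])
    by_cases hsa : s a = t a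
    · rwa [← hsa, update_eq_self] at hrest
    · refine .head ⟨a, ?_⟩ hrest
      rw [Bool.eq_not.mpr (Ne.symm hsa)]

theorem detailedBalance_of_update_true (R : (ι → Bool) → (ι → Bool) → ℝ)
    (π : (ι → Bool) → ℝ)
    (hsupp : ∀ s s', R s s' ≠ 0 → ∃ i, s' = update s i (!s i))
    (hup : ∀ s i, s i = false →
      π s * R s (update s i true) = π (update s i true) * R (update s i true) s) :
    ∀ s s', π s * R s s' = π s' * R s' s := by
  have hflip : ∀ s i,
      π s * R s (update s i (!s i)) = π (update s i (!s i)) * R (update s i (!s i)) s := by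
    intro s i
    cases hs : s i
    · exact hup s i hs
    · have hback : update (update s i (!s i)) i true = s := by simp [← hs]
      have := hup (update s i (!s i)) i (by simp [hs])
      rw [hback, hs] at this
      exact this.symm
  intro s s'
  by_cases h : R s s' = 0 ∧ R s' s = 0
  · rw [h.1, h.2, mul_zero, mul_zero]
  rcases not_and_or.mp h with h | h
  · obtain ⟨i, rfl⟩ := hsupp s s' h
    exact hflip s i
  · obtain ⟨i, rfl⟩ := hsupp s' s h
    exact (hflip s' i).symm

end BoolFlip

theorem bval_update_true {ι : Type*} [DecidableEq ι] (s : ι → Bool) {i : ι}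
    (hs : s i = false) :
    (fun j => bval (update s i true j)) = (fun j => bval (s j)) + Pi.single i 1 := by
  funext j
  rcases eq_or_ne j i with rfl | hj
  · simp [bval, hs]
  · simp [hj]

theorem negEnergy_update_true_sub {ι : Type*} [Fintype ι] [LinearOrder ι] {w : ι → ι → ℝ}
    (θ : ι → ℝ) (hsym : ∀ i j, w i j = w j i) (hdiag : ∀ i, w i i = 0) (s : ι → Bool)
    {i : ι} (hs : s i = false) :
    negEnergy w θ (fun j => bval (update s i true j)) - negEnergy w θ (fun j => bval (s j)) =
      θ i + ∑ j ∈ univ.filter (fun j => w i j ≠ 0), w i j * bval (s j) := by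
  rw [bval_update_true s hs, negEnergy_add_single θ hsym hdiag,
    sum_filter_of_ne fun j _ h => left_ne_zero_of_mul h]
  ring

section MarkovChain

variable {σ : Type*} [Fintype σ] (R : σ → σ → ℝ) (π : σ → ℝ)

theorem sum_flux_eq_zero_of_detailedBalance (hdb : ∀ s s', π s * R s s' = π s' * R s' s)
    (s' : σ) : ∑ s, (R s s' * π s - R s' s * π s') = 0 :=
  sum_eq_zero fun s _ => by linarith [hdb s s']

theorem sum_flux_eq_mul_sum_ratio (hdb : ∀ s s', π s * R s s' = π s' * R s' s)
    (hπ : ∀ s, π s ≠ 0) (p : σ → ℝ) (s : σ) :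
    ∑ t, (R t s * p t - R s t * p s) = π s * ∑ t, R s t * (p t / π t - p s / π s) := by
  rw [mul_sum]
  refine sum_congr rfl fun t _ => ?_
  have := hdb t s
  field_simp [hπ s, hπ t]
  linear_combination p t * this

theorem ratio_eq_of_forall_ratio_le (hR : ∀ s t, 0 ≤ R s t) (hπ : ∀ s, 0 < π s)
    (hdb : ∀ s s', π s * R s s' = π s' * R s' s) {p : σ → ℝ}
    (hstat : ∀ s', ∑ s, (R s s' * p s - R s' s * p s') = 0) {s t : σ}
    (hmax : ∀ u, p u / π u ≤ p s / π s) (hst : 0 < R s t) : p t / π t = p s / π s := by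
  have hsum : ∑ u, R s u * (p u / π u - p s / π s) = 0 := by
    have := hstat s
    rw [sum_flux_eq_mul_sum_ratio R π hdb (fun u => (hπ u).ne') p s] at this
    exact (mul_eq_zero.mp this).resolve_left (hπ s).ne'
  have hnonpos : ∀ u ∈ univ, R s u * (p u / π u - p s / π s) ≤ 0 := fun u _ =>
    mul_nonpos_of_nonneg_of_nonpos (hR s u) (sub_nonpos.mpr (hmax u))
  have ht := (sum_eq_zero_iff_of_nonpos hnonpos).mp hsum t (mem_univ t)
  exact sub_eq_zero.mp ((mul_eq_zero.mp ht).resolve_left hst.ne')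

theorem eq_of_stationary_of_detailedBalance (hR : ∀ s t, 0 ≤ R s t) (hπ : ∀ s, 0 < π s)
    (hdb : ∀ s s', π s * R s s' = π s' * R s' s)
    (hirr : ∀ s t, ReflTransGen (fun a b => 0 < R a b) s t) {p : σ → ℝ}
    (hstat : ∀ s', ∑ s, (R s s' * p s - R s' s * p s') = 0)
    (hsum : ∑ s, p s = ∑ s, π s) : p = π := by
  funext s₀
  have : Nonempty σ := ⟨s₀⟩
  obtain ⟨m, hm⟩ := Finite.exists_max fun u => p u / π u
  have hconst : ∀ s, p s / π s = p m / π m := fun s => by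
    induction hirr m s with
    | refl => rfl
    | tail _ hbc ih =>
      exact (ratio_eq_of_forall_ratio_le R π hR hπ hdb hstat (ih ▸ hm) hbc).trans ih
  have hp : ∀ s, p s = p m / π m * π s := fun s => by
    rw [← hconst s, div_mul_cancel₀ _ (hπ s).ne']
  have hone : p m / π m = 1 := by
    have hpos : 0 < ∑ s, π s := sum_pos (fun s _ => hπ s) univ_nonempty
    rw [Fintype.sum_congr _ _ hp, ← mul_sum] at hsum
    exact (mul_eq_right₀ hpos.ne').mp hsum
  rw [hp, hone, one_mul]

end MarkovChain

theorem exp_div_mul_eq_of_rate_ratio {σ : Type*} (F : σ → ℝ) (Z : ℝ) (R : σ → σ → ℝ)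
    {s s' : σ} (hR : 0 < R s' s) (h : R s s' / R s' s = Real.exp (F s' - F s)) :
    Real.exp (F s) / Z * R s s' = Real.exp (F s') / Z * R s' s := by
  rw [div_eq_iff hR.ne', Real.exp_sub] at h
  rw [h]
  field_simp

theorem direct_cbm_realizes_boltzmann_machine_general (N : ℕ)
    (w : Fin N → Fin N → ℝ) (θ : Fin N → ℝ)
    (hsym : ∀ i j, w i j = w j i) (hdiag : ∀ i, w i i = 0)
    -- CTMC transition rates on the reachable state space {0,1}^N
    (R : (Fin N → Bool) → (Fin N → Bool) → ℝ)
    (hRnonneg : ∀ s s', 0 ≤ R s s')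
    -- transitions flip exactly one node
    (hRsupp : ∀ s s', R s s' ≠ 0 → ∃ i, s' = Function.update s i (!(s i)) ∧ s' ≠ s)
    -- the flip reactions have positive rates with the prescribed ratio
    (hRpos : ∀ s i, 0 < R s (Function.update s i (!(s i))))
    (hratio : ∀ (s : Fin N → Bool) (i : Fin N), s i = false →
      R s (Function.update s i true) / R (Function.update s i true) s =
        Real.exp (θ i + ∑ j ∈ Finset.univ.filter (fun j => w i j ≠ 0), w i j * bval (s j)))
    -- the claimed stationary distribution
    (Z : ℝ)
    (hZ : Z = ∑ s : Fin N → Bool,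
      Real.exp ((∑ p ∈ Finset.univ.filter (fun p : Fin N × Fin N => p.1 < p.2),
          w p.1 p.2 * bval (s p.1) * bval (s p.2)) + ∑ i, θ i * bval (s i)))
    (π : (Fin N → Bool) → ℝ)
    (hπ : ∀ s, π s =
      Real.exp ((∑ p ∈ Finset.univ.filter (fun p : Fin N × Fin N => p.1 < p.2),
          w p.1 p.2 * bval (s p.1) * bval (s p.2)) + ∑ i, θ i * bval (s i)) / Z)
    -- the Boltzmann machine distribution
    (E : (Fin N → ℝ) → ℝ)
    (hE : ∀ x, E x =
      -(∑ p ∈ Finset.univ.filter (fun p : Fin N × Fin N => p.1 < p.2),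
          w p.1 p.2 * x p.1 * x p.2) - ∑ i, θ i * x i)
    (ZBM : ℝ) (hZBM : ZBM = ∑ s : Fin N → Bool, Real.exp (-(E (fun i => bval (s i)))))
    (P : (Fin N → Bool) → ℝ) (hP : ∀ s, P s = Real.exp (-(E (fun i => bval (s i)))) / ZBM) :
    -- (1) detailed balance of the CTMC w.r.t. π
    (∀ s s', π s * R s s' = π s' * R s' s) ∧
    -- (2) π is stationary and is the unique stationary distribution
    (∀ s', ∑ s, (R s s' * π s - R s' s * π s') = 0) ∧
    (∀ p : (Fin N → Bool) → ℝ, (∀ s, 0 ≤ p s) → (∑ s, p s = 1) →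
      (∀ s', ∑ s, (R s s' * p s - R s' s * p s') = 0) → p = π) ∧
    -- (3) π equals the Boltzmann machine distribution under the bijection x_i = x_i^{ON}
    (∀ s, π s = P s) := by
  set F : (Fin N → Bool) → ℝ := fun s => negEnergy w θ (fun j => bval (s j)) with hF
  have hZF : Z = ∑ s, Real.exp (F s) := hZ
  have hπF : ∀ s, π s = Real.exp (F s) / Z := hπ
  have hZpos : 0 < Z := hZF ▸ sum_pos (fun s _ => Real.exp_pos _) univ_nonempty
  have hπpos : ∀ s, 0 < π s := fun s => (hπF s).symm ▸ div_pos (Real.exp_pos _) hZpos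
  have hsumπ : ∑ s, π s = 1 := by
    simp only [hπF, ← sum_div, ← hZF, div_self hZpos.ne']
  have hratioF : ∀ s i, s i = false →
      R s (update s i true) / R (update s i true) s = Real.exp (F (update s i true) - F s) :=
    fun s i hsi => by rw [hratio s i hsi, negEnergy_update_true_sub θ hsym hdiag s hsi]
  have hdb : ∀ s s', π s * R s s' = π s' * R s' s :=
    detailedBalance_of_update_true R π (fun s s' h => (hRsupp s s' h).imp fun _ => And.left)
      fun s i hsi => by
        rw [hπF, hπF]
        refine exp_div_mul_eq_of_rate_ratio F Z R ?_ (hratioF s i hsi)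
        simpa [← hsi] using hRpos (update s i true) i
  refine ⟨hdb, sum_flux_eq_zero_of_detailedBalance R π hdb, fun p _ hp hstat => ?_,
    fun s => ?_⟩
  · refine eq_of_stationary_of_detailedBalance R π hRnonneg hπpos hdb (fun s t => ?_) hstat
      (hp.trans hsumπ.symm)
    refine ReflTransGen.mono ?_ s t (reflTransGen_update_not s t)
    rintro a _ ⟨i, rfl⟩
    exact hRpos a i
  · have hEF : ∀ s, -E (fun j => bval (s j)) = F s := fun s => by
      rw [hE]
      simp only [hF, negEnergy, pairInteraction]
      ring
    rw [hπF, hP, hZBM, hZF]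
    simp only [hEF]

/-- The direct CBM (dual-rail species with conservation `x_i^{ON}+x_i^{OFF}=1`,
so states are `Fin N → Bool`, and single-node flip reactions with rate-constant ratio
`exp (θ i + ∑_{j ∈ N(i)} w i j * x_j^{ON})`) induces a CTMC that is detailed balanced with
respect to `π s ∝ exp (∑_{i<j} w i j x_i^{ON} x_j^{ON} + ∑ i, θ i x_i^{ON})`; `π` is the unique
stationary distribution, and it equals the Boltzmann machine distribution `e^{-E x}/Z`. -/
theorem direct_cbm_realizes_boltzmann_machine (N : ℕ)
    (w : Fin N → Fin N → ℝ) (θ : Fin N → ℝ)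
    (hsym : ∀ i j, w i j = w j i) (hdiag : ∀ i, w i i = 0)
    -- CTMC transition rates on the reachable state space {0,1}^N
    (R : (Fin N → Bool) → (Fin N → Bool) → ℝ)
    (hRnonneg : ∀ s s', 0 ≤ R s s')
    -- transitions flip exactly one node
    (hRsupp : ∀ s s', R s s' ≠ 0 → ∃ i, s' = Function.update s i (!(s i)) ∧ s' ≠ s)
    (hRdiag : ∀ s, R s s = 0)
    -- the flip reactions have positive rates with the prescribed ratio
    (hRpos : ∀ s i, 0 < R s (Function.update s i (!(s i))))
    (hratio : ∀ (s : Fin N → Bool) (i : Fin N), s i = false →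
      R s (Function.update s i true) / R (Function.update s i true) s =
        Real.exp (θ i + ∑ j ∈ Finset.univ.filter (fun j => w i j ≠ 0), w i j * bval (s j)))
    -- the claimed stationary distribution
    (Z : ℝ)
    (hZ : Z = ∑ s : Fin N → Bool,
      Real.exp ((∑ p ∈ Finset.univ.filter (fun p : Fin N × Fin N => p.1 < p.2),
          w p.1 p.2 * bval (s p.1) * bval (s p.2)) + ∑ i, θ i * bval (s i)))
    (π : (Fin N → Bool) → ℝ)
    (hπ : ∀ s, π s =
      Real.exp ((∑ p ∈ Finset.univ.filter (fun p : Fin N × Fin N => p.1 < p.2),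
          w p.1 p.2 * bval (s p.1) * bval (s p.2)) + ∑ i, θ i * bval (s i)) / Z)
    -- the Boltzmann machine distribution
    (E : (Fin N → ℝ) → ℝ)
    (hE : ∀ x, E x =
      -(∑ p ∈ Finset.univ.filter (fun p : Fin N × Fin N => p.1 < p.2),
          w p.1 p.2 * x p.1 * x p.2) - ∑ i, θ i * x i)
    (ZBM : ℝ) (hZBM : ZBM = ∑ s : Fin N → Bool, Real.exp (-(E (fun i => bval (s i)))))
    (P : (Fin N → Bool) → ℝ) (hP : ∀ s, P s = Real.exp (-(E (fun i => bval (s i)))) / ZBM) :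
    -- (1) detailed balance of the CTMC w.r.t. π
    (∀ s s', π s * R s s' = π s' * R s' s) ∧
    -- (2) π is stationary and is the unique stationary distribution
    (∀ s', ∑ s, (R s s' * π s - R s' s * π s') = 0) ∧
    (∀ p : (Fin N → Bool) → ℝ, (∀ s, 0 ≤ p s) → (∑ s, p s = 1) →
      (∀ s', ∑ s, (R s s' * p s - R s' s * p s') = 0) → p = π) ∧
    -- (3) π equals the Boltzmann machine distribution under the bijection x_i = x_i^{ON}
    (∀ s, π s = P s) :=
  direct_cbm_realizes_boltzmann_machine_general N w θ hsym hdiag R hRnonneg hRsupp hRpos hratio Z hZ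
    π hπ E hE ZBM hZBM P hP
end

section
/- In the direct CBM, for any pair of adjacent reachable states s, s' differing only in node i (with x_i^{OFF} = 1 in s and x_i^{ON} = 1 in s'), exactly one forward reaction and one reverse reaction of the family indexed by neighbor configurations α^i has nonzero propensity, and the CTMC transition rates satisfy R_{s→s'}/R_{s'→s} = exp(θ_i + ∑_{j∈N(i)} w_{ij} x_j^{ON}). -/
/-- In the direct CBM, for any pair of adjacent reachable states `s, s'`
differing only at node `i` (`x_i^{OFF} = 1` in `s`, `x_i^{ON} = 1` in `s'`), exactly one
forward and one reverse reaction from the family indexed by neighbor configurations `α` has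
nonzero propensity, and the CTMC rates satisfy
`R_{s→s'}/R_{s'→s} = exp (θ i + ∑_{j ∈ N(i)} w i j x_j^{ON})`. -/
theorem dcbm_unique_active_reaction_and_rate_ratio (N : ℕ)
    (w : Fin N → Fin N → ℝ) (θ : Fin N → ℝ)
    (hsym : ∀ i j, w i j = w j i) (hdiag : ∀ i, w i i = 0)
    -- the neighborhood N(i) = {j | w i j ≠ 0}
    (Ni : Fin N → Finset (Fin N)) (hNi : ∀ i j, j ∈ Ni i ↔ w i j ≠ 0)
    -- rate constants for the reaction of node i with neighbor configuration α
    (kp km : Fin N → (Fin N → Bool) → ℝ)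
    (hkp : ∀ i α, 0 < kp i α) (hkm : ∀ i α, 0 < km i α)
    (hk : ∀ i α, kp i α / km i α =
      Real.exp (θ i + ∑ j ∈ Ni i, w i j * bval (α j)))
    -- mass-action propensities on binary (dual-rail) states; configurations α are
    -- normalized to be false off N(i) so each reaction is counted once
    (ρp ρm : Fin N → (Fin N → Bool) → (Fin N → Bool) → ℝ)
    (hρp : ∀ i α s, ρp i α s =
      if s i = false ∧ (∀ j ∈ Ni i, s j = α j) ∧ (∀ j, j ∉ Ni i → α j = false)
      then kp i α else 0)
    (hρm : ∀ i α s, ρm i α s =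
      if s i = true ∧ (∀ j ∈ Ni i, s j = α j) ∧ (∀ j, j ∉ Ni i → α j = false)
      then km i α else 0)
    -- adjacent states s (node i OFF) and s' (node i ON)
    (i : Fin N) (s : Fin N → Bool) (hs : s i = false)
    (s' : Fin N → Bool) (hs' : s' = Function.update s i true) :
    (∃! α : Fin N → Bool, ρp i α s ≠ 0) ∧
    (∃! α : Fin N → Bool, ρm i α s' ≠ 0) ∧
    (∑ α : Fin N → Bool, ρp i α s) / (∑ α : Fin N → Bool, ρm i α s') =
      Real.exp (θ i + ∑ j ∈ Ni i, w i j * bval (s j)) := by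

  have hii : i ∉ Ni i := by simp [hNi, hdiag]
  set α0 : Fin N → Bool := fun j => if j ∈ Ni i then s j else false with hα0
  have hcondp : ∀ α : Fin N → Bool,
      (s i = false ∧ (∀ j ∈ Ni i, s j = α j) ∧ (∀ j, j ∉ Ni i → α j = false)) ↔ α = α0 := by
    intro α
    constructor
    · rintro ⟨-, h1, h2⟩
      funext j
      by_cases hj : j ∈ Ni i
      · simp [hα0, hj, (h1 j hj).symm]
      · simp [hα0, hj, h2 j hj]
    · rintro rfl
      refine ⟨hs, fun j hj => by simp [hα0, hj], fun j hj => by simp [hα0, hj]⟩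
  have hs'j : ∀ j ∈ Ni i, s' j = s j := by
    intro j hj
    have : j ≠ i := fun h => hii (h ▸ hj)
    simp [hs', Function.update_of_ne this]
  have hcondm : ∀ α : Fin N → Bool,
      (s' i = true ∧ (∀ j ∈ Ni i, s' j = α j) ∧ (∀ j, j ∉ Ni i → α j = false)) ↔ α = α0 := by
    intro α
    constructor
    · rintro ⟨-, h1, h2⟩
      funext j
      by_cases hj : j ∈ Ni i
      · simp [hα0, hj, ← h1 j hj, hs'j j hj]
      · simp [hα0, hj, h2 j hj]
    · rintro rfl
      exact ⟨by simp [hs'], fun j hj => by simp [hα0, hj, hs'j j hj],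
        fun j hj => by simp [hα0, hj]⟩
  have hρp' : ∀ α, ρp i α s = if α = α0 then kp i α0 else 0 := by
    intro α
    rw [hρp]
    rcases eq_or_ne α α0 with h | h
    · rw [h, if_pos ((hcondp α0).mpr rfl), if_pos rfl]
    · rw [if_neg (fun hc => h ((hcondp α).mp hc)), if_neg h]
  have hρm' : ∀ α, ρm i α s' = if α = α0 then km i α0 else 0 := by
    intro α
    rw [hρm]
    rcases eq_or_ne α α0 with h | h
    · rw [h, if_pos ((hcondm α0).mpr rfl), if_pos rfl]
    · rw [if_neg (fun hc => h ((hcondm α).mp hc)), if_neg h]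
  refine ⟨⟨α0, by simp [hρp', (hkp i α0).ne'], fun α hα => by
      by_contra h; simp [hρp', h] at hα⟩,
    ⟨α0, by simp [hρm', (hkm i α0).ne'], fun α hα => by
      by_contra h; simp [hρm', h] at hα⟩, ?_⟩
  have h1 : (∑ α : Fin N → Bool, ρp i α s) = kp i α0 := by
    simp [hρp']
  have h2 : (∑ α : Fin N → Bool, ρm i α s') = km i α0 := by
    simp [hρm']
  rw [h1, h2, hk]
  congr 1
  refine congrArg _ (Finset.sum_congr rfl fun j hj => ?_)
  simp [hα0, hj]
end
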